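/- arXiv:1501.02243 — 5 statements merged into one kernel-verified Lean document; each statement's English description precedes it below -/
import Mathlib

section
/- Let C be any real m×m matrix and let I be the m×m identity matrix. Then (x,x) ∈ Δ_m × Δ_m is a Nash equilibrium of the symmetric bimatrix game (C, Cᵀ) if and only if there exists y ∈ Δ_m such that (x,y) is a Nash equilibrium of the imitation game (I, Cᵀ). -/
open Matrix BigOperators

def IsMixed {I : Type*} [Fintype I] (x : I → ℝ) : Prop :=
  (∀ i, 0 ≤ x i) ∧ ∑ i, x i = 1

def IsNash {I J : Type*} [Fintype I] [Fintype J]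
    (A B : Matrix I J ℝ) (x : I → ℝ) (y : J → ℝ) : Prop :=
  IsMixed x ∧ IsMixed y ∧
  (∀ x' : I → ℝ, IsMixed x' → x' ⬝ᵥ (A *ᵥ y) ≤ x ⬝ᵥ (A *ᵥ y)) ∧
  (∀ y' : J → ℝ, IsMixed y' → x ⬝ᵥ (B *ᵥ y') ≤ x ⬝ᵥ (B *ᵥ y))

/-!
A strategy is a best response to a payoff vector exactly when its support lies in the set of
maximal coordinates. In the imitation game player 1 best-responds to `y` itself, so
`supp x ⊆ argmax y ⊆ supp y ⊆ argmax (C x)`, which makes `x` a best response to `C x`.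
Conversely, if `supp x ⊆ argmax (C x)`, the uniform strategy `y` on `supp x` has
`argmax y = supp x`, so `(x, y)` is an equilibrium of the imitation game.
-/

open Finset

variable {ι : Type*}

section uniformOn

variable [DecidableEq ι] {s : Finset ι}

noncomputable def uniformOn (s : Finset ι) (i : ι) : ℝ := if i ∈ s then (#s : ℝ)⁻¹ else 0

theorem mem_of_uniformOn_pos {i : ι} (hi : 0 < uniformOn s i) : i ∈ s := by
  by_contra h
  simp [uniformOn, h] at hi

theorem uniformOn_le {i : ι} (hi : i ∈ s) (j : ι) : uniformOn s j ≤ uniformOn s i := by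
  unfold uniformOn
  split_ifs <;> first | rfl | positivity

theorem isMixed_uniformOn [Fintype ι] (hs : s.Nonempty) : IsMixed (uniformOn s) := by
  refine ⟨fun i => by unfold uniformOn; split_ifs <;> positivity, ?_⟩
  simp only [uniformOn]
  rw [sum_ite_mem, univ_inter, sum_const, nsmul_eq_mul]
  exact mul_inv_cancel₀ (Nat.cast_ne_zero.2 hs.card_pos.ne')

end uniformOn

variable [Fintype ι]

def IsBestResponse (x v : ι → ℝ) : Prop :=
  ∀ x' : ι → ℝ, IsMixed x' → x' ⬝ᵥ v ≤ x ⬝ᵥ v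

namespace IsMixed

variable {x v : ι → ℝ}

theorem exists_pos (hx : IsMixed x) : ∃ i, 0 < x i := by
  by_contra! h
  have : ∑ i, x i ≤ 0 := sum_nonpos fun i _ => h i
  linarith [hx.2]

theorem dotProduct_le {c : ℝ} (hx : IsMixed x) (h : ∀ i, v i ≤ c) : x ⬝ᵥ v ≤ c :=
  calc x ⬝ᵥ v ≤ ∑ i, x i * c := sum_le_sum fun i _ => mul_le_mul_of_nonneg_left (h i) (hx.1 i)
    _ = c := by rw [← sum_mul, hx.2, one_mul]

theorem dotProduct_eq {c : ℝ} (hx : IsMixed x) (h : ∀ i, 0 < x i → v i = c) : x ⬝ᵥ v = c :=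
  calc x ⬝ᵥ v = ∑ i, x i * c := by
        refine sum_congr rfl fun i _ => ?_
        rcases (hx.1 i).eq_or_lt with hi | hi
        · simp [← hi]
        · rw [h i hi]
    _ = c := by rw [← sum_mul, hx.2, one_mul]

theorem apply_eq_of_dotProduct_eq {c : ℝ} (hx : IsMixed x) (h : ∀ i, v i ≤ c)
    (hc : x ⬝ᵥ v = c) {i : ι} (hi : 0 < x i) : v i = c := by
  refine (h i).antisymm (not_lt.1 fun hlt => ?_)
  have : x ⬝ᵥ v < ∑ j, x j * c :=
    sum_lt_sum (fun j _ => mul_le_mul_of_nonneg_left (h j) (hx.1 j))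
      ⟨i, mem_univ i, mul_lt_mul_of_pos_left hlt hi⟩
  rw [← sum_mul, hx.2, one_mul] at this
  exact this.ne hc

end IsMixed

theorem isMixed_single [DecidableEq ι] (i : ι) : IsMixed (Pi.single i (1 : ℝ)) :=
  ⟨fun j => by by_cases h : j = i <;> simp [h], by simp⟩

theorem isBestResponse_iff {x v : ι → ℝ} (hx : IsMixed x) :
    IsBestResponse x v ↔ ∀ i j, 0 < x i → v j ≤ v i := by
  classical
  constructor
  · intro h i j hi
    have hle : ∀ k, v k ≤ x ⬝ᵥ v := fun k => by simpa using h _ (isMixed_single k)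
    rw [hx.apply_eq_of_dotProduct_eq hle rfl hi]
    exact hle j
  · intro h x' hx'
    obtain ⟨i, hi⟩ := hx.exists_pos
    rw [hx.dotProduct_eq fun k hk => (h i k hi).antisymm (h k i hk)]
    exact hx'.dotProduct_le fun j => h i j hi

theorem IsBestResponse.trans {x y v : ι → ℝ} (hx : IsMixed x) (hy : IsMixed y)
    (hxy : IsBestResponse x y) (hyv : IsBestResponse y v) : IsBestResponse x v := by
  rw [isBestResponse_iff hx] at hxy ⊢
  rw [isBestResponse_iff hy] at hyv
  obtain ⟨k, hk⟩ := hy.exists_pos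
  exact fun i j hi => hyv i j (hk.trans_le (hxy i k hi))

theorem isNash_iff {κ : Type*} [Fintype κ] (A B : Matrix ι κ ℝ) (x : ι → ℝ) (y : κ → ℝ) :
    IsNash A B x y ↔
      IsMixed x ∧ IsMixed y ∧ IsBestResponse x (A *ᵥ y) ∧ IsBestResponse y (x ᵥ* B) := by
  simp only [IsNash, IsBestResponse, dotProduct_mulVec, dotProduct_comm _ (x ᵥ* B)]

/-- McLennan–Tourky: `(x,x)` is a symmetric Nash equilibrium of `(C, Cᵀ)` iff
`(x,y)` is a Nash equilibrium of the imitation game `(I, Cᵀ)` for some `y`. -/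
theorem stmt1 {m : ℕ} (C : Matrix (Fin m) (Fin m) ℝ) (x : Fin m → ℝ) :
    IsNash C Cᵀ x x ↔
      ∃ y : Fin m → ℝ, IsNash (1 : Matrix (Fin m) (Fin m) ℝ) Cᵀ x y := by
  simp only [isNash_iff, one_mulVec, vecMul_transpose]
  constructor
  · rintro ⟨hx, -, hbr, -⟩
    set s : Finset (Fin m) := {i | 0 < x i}
    have hs : s.Nonempty := by simpa [s, Finset.Nonempty] using hx.exists_pos
    have hy := isMixed_uniformOn hs
    refine ⟨uniformOn s, hx, hy, ?_, ?_⟩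
    · exact (isBestResponse_iff hx).2 fun i j hi => uniformOn_le (by simpa [s] using hi) j
    · rw [isBestResponse_iff hy]
      rw [isBestResponse_iff hx] at hbr
      exact fun i j hi => hbr i j (by simpa [s] using mem_of_uniformOn_pos hi)
  · rintro ⟨y, hx, hy, hxy, hyv⟩
    exact ⟨hx, hx, hxy.trans hx hy hyv, hxy.trans hx hy hyv⟩
end

section
/- Let (A,B) be a nondegenerate m×n bimatrix game in which A and Bᵀ are entrywise nonnegative and have no zero column, and let k ∈ {1,…,m+n}. Then there do not exist a vertex x of P and three pairwise distinct vertices y, y', y'' of Q such that each of the pairs (x,y), (x,y'), (x,y'') has all labels in {1,…,m+n} \ {k}. Symmetrically, there do not exist a vertex y of Q and three pairwise distinct vertices x, x', x'' of P such that each of the pairs (x,y), (x',y), (x'',y) has all labels in {1,…,m+n} \ {k}. -/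
open Matrix BigOperators

/-- Membership in the polytope `P = {x : x ≥ 0, Bᵀx ≤ 1}`. -/
def MemP {m n : ℕ} (B : Matrix (Fin m) (Fin n) ℝ) (x : Fin m → ℝ) : Prop :=
  (∀ i, 0 ≤ x i) ∧ ∀ j, (Bᵀ *ᵥ x) j ≤ 1

/-- Membership in the polytope `Q = {y : Ay ≤ 1, y ≥ 0}`. -/
def MemQ {m n : ℕ} (A : Matrix (Fin m) (Fin n) ℝ) (y : Fin n → ℝ) : Prop :=
  (∀ j, 0 ≤ y j) ∧ ∀ i, (A *ᵥ y) i ≤ 1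

/-- `x ∈ P` has label `k` (labels are `Fin m ⊕ Fin n`, for `{1,…,m+n}`):
label `i` if `x_i = 0`, label `m+j` if `(Bᵀx)_j = 1`. -/
def LabelP {m n : ℕ} (B : Matrix (Fin m) (Fin n) ℝ) (x : Fin m → ℝ) :
    Fin m ⊕ Fin n → Prop
  | Sum.inl i => x i = 0
  | Sum.inr j => (Bᵀ *ᵥ x) j = 1

/-- `y ∈ Q` has label `k`: label `i` if `(Ay)_i = 1`, label `m+j` if `y_j = 0`. -/
def LabelQ {m n : ℕ} (A : Matrix (Fin m) (Fin n) ℝ) (y : Fin n → ℝ) :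
    Fin m ⊕ Fin n → Prop
  | Sum.inl i => (A *ᵥ y) i = 1
  | Sum.inr j => y j = 0

/-- The game `(A,B)` is nondegenerate: no point of `P` has more than `m` labels
and no point of `Q` has more than `n` labels. -/
def Nondegenerate {m n : ℕ} (A B : Matrix (Fin m) (Fin n) ℝ) : Prop :=
  (∀ x, MemP B x → {k | LabelP B x k}.ncard ≤ m) ∧
  (∀ y, MemQ A y → {k | LabelQ A y k}.ncard ≤ n)

/-- A vertex of `P`: a point of `P` with exactly `m` labels. -/
def VertexP {m n : ℕ} (B : Matrix (Fin m) (Fin n) ℝ) (x : Fin m → ℝ) : Prop :=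
  MemP B x ∧ {k | LabelP B x k}.ncard = m

/-- A vertex of `Q`: a point of `Q` with exactly `n` labels. -/
def VertexQ {m n : ℕ} (A : Matrix (Fin m) (Fin n) ℝ) (y : Fin n → ℝ) : Prop :=
  MemQ A y ∧ {k | LabelQ A y k}.ncard = n

/-!
A vertex `z` of a nondegenerate polyhedron `{z | ∀ l, φ l z ≤ c l}` is pinned down by its active
constraints: if a nonzero direction `d` annihilated all of them, then, the polyhedron being
bounded, moving from `z` along `d` would reach a feasible point with one more active constraint.
Boundedness of `Q` comes from `A ≥ 0` having no zero column.

If `x` is a vertex of `P` and `(x, y)` has all labels but `k`, the labels of `y` contain the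
`n - 1` labels outside `L(x) ∪ {k}`. Three such vertices `y` share these `n - 1` active constraints,
so the differences `y' - y`, `y'' - y` are proportional and the three points are collinear. The
middle one then lies strictly between two feasible points, which a vertex cannot. The second
claim is the first one for `Q(Bᵀ)`, which is `P` with the two halves of the labels swapped.
-/

namespace Polyhedron

variable {ι V : Type*} [AddCommGroup V] [Module ℝ V] (φ : ι → V →ₗ[ℝ] ℝ) (c : ι → ℝ)

def activeSet (z : V) : Set ι := {l | φ l z = c l}

variable {φ c}

@[simp]
theorem mem_activeSet {z : V} {l : ι} : l ∈ activeSet φ c z ↔ φ l z = c l := Iff.rfl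

section Finite

variable [Finite ι] {N : ℕ}

theorem eq_zero_of_forall_mem_activeSet_map_eq_zero (hbdd : ∀ d : V, d ≠ 0 → ∃ l, 0 < φ l d)
    (hnd : ∀ z, (∀ l, φ l z ≤ c l) → (activeSet φ c z).ncard ≤ N) {z d : V}
    (hz : ∀ l, φ l z ≤ c l) (hN : N ≤ (activeSet φ c z).ncard)
    (hd : ∀ l ∈ activeSet φ c z, φ l d = 0) : d = 0 := by
  classical
  have := Fintype.ofFinite ι
  by_contra hd0
  obtain ⟨l₀, hl₀⟩ := hbdd d hd0
  let D : Finset ι := Finset.univ.filter fun l => 0 < φ l d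
  let f : ι → ℝ := fun l => (c l - φ l z) / φ l d
  obtain ⟨l₁, hl₁D, hl₁⟩ := D.exists_min_image f ⟨l₀, by simp [D, hl₀]⟩
  have hl₁pos : 0 < φ l₁ d := by simpa [D] using hl₁D
  have ht : 0 ≤ f l₁ := div_nonneg (by linarith [hz l₁]) hl₁pos.le
  set z' := z + f l₁ • d
  have hφz' : ∀ l, φ l z' = φ l z + f l₁ * φ l d := by simp [z']
  have hz' : ∀ l, φ l z' ≤ c l := by
    intro l
    rw [hφz']
    by_cases hl : 0 < φ l d
    · have : f l₁ * φ l d ≤ f l * φ l d :=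
        mul_le_mul_of_nonneg_right (hl₁ l (by simp [D, hl])) hl.le
      have : f l * φ l d = c l - φ l z := div_mul_cancel₀ _ hl.ne'
      linarith
    · nlinarith [hz l]
  have hsub : insert l₁ (activeSet φ c z) ⊆ activeSet φ c z' := by
    rintro l (rfl | hl)
    · rw [mem_activeSet, hφz', div_mul_cancel₀ _ hl₁pos.ne']
      ring
    · rw [mem_activeSet, hφz', hd l hl, mul_zero, add_zero]
      exact hl
  have hl₁ : l₁ ∉ activeSet φ c z := fun h => hl₁pos.ne' (hd l₁ h)
  have := Set.ncard_le_ncard hsub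
  rw [Set.ncard_insert_of_notMem hl₁] at this
  linarith [hnd z' hz']

theorem not_sbtw_of_le_ncard_activeSet (hbdd : ∀ d : V, d ≠ 0 → ∃ l, 0 < φ l d)
    (hnd : ∀ z, (∀ l, φ l z ≤ c l) → (activeSet φ c z).ncard ≤ N)
    {z w z' : V} (hz : ∀ l, φ l z ≤ c l) (hz' : ∀ l, φ l z' ≤ c l)
    (hw : N ≤ (activeSet φ c w).ncard) : ¬ Sbtw ℝ z w z' := by
  intro hzwz'
  obtain ⟨t, ⟨ht₀, ht₁⟩, rfl⟩ := hzwz'.mem_image_Ioo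
  have hφ : ∀ l, φ l (AffineMap.lineMap z z' t) = (1 - t) * φ l z + t * φ l z' := by
    intro l
    simp only [AffineMap.lineMap_apply_module', map_add, map_smul, map_sub, smul_eq_mul]
    ring
  have hw' : ∀ l, φ l (AffineMap.lineMap z z' t) ≤ c l := by
    intro l
    rw [hφ]
    nlinarith [hz l, hz' l]
  refine hzwz'.left_ne_right (sub_eq_zero.mp ?_).symm
  refine eq_zero_of_forall_mem_activeSet_map_eq_zero hbdd hnd hw' hw fun l hl => ?_
  rw [mem_activeSet, hφ] at hl
  have hlz : φ l z = c l := by nlinarith [hz l, hz' l]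
  have hlz' : φ l z' = c l := by nlinarith [hz l, hz' l]
  rw [map_sub, hlz, hlz', sub_self]

theorem mem_affineSpan_pair_of_subset_activeSet (hbdd : ∀ d : V, d ≠ 0 → ∃ l, 0 < φ l d)
    (hnd : ∀ z, (∀ l, φ l z ≤ c l) → (activeSet φ c z).ncard ≤ N)
    {S : Set ι} (hS : N ≤ S.ncard + 1) {z z' z'' : V}
    (hz : ∀ l, φ l z ≤ c l) (hzN : N ≤ (activeSet φ c z).ncard) (hzz' : z ≠ z')
    (hSz : S ⊆ activeSet φ c z) (hSz' : S ⊆ activeSet φ c z') (hSz'' : S ⊆ activeSet φ c z'') :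
    z'' ∈ line[ℝ, z, z'] := by
  have hker : ∀ {w}, S ⊆ activeSet φ c w → ∀ l ∈ S, φ l (w - z) = 0 := fun hw l hl => by
    rw [map_sub, hw hl, hSz hl, sub_self]
  set d₁ := z' - z
  set d₂ := z'' - z
  have hd₁ : d₁ ≠ 0 := sub_ne_zero.mpr hzz'.symm
  obtain ⟨a, haz, haS⟩ : ∃ a ∈ activeSet φ c z, a ∉ S := by
    by_contra! h
    exact hd₁ <| eq_zero_of_forall_mem_activeSet_map_eq_zero hbdd hnd hz hzN
      fun l hl => hker hSz' l (h l hl)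
  have hactive : activeSet φ c z = insert a S := by
    refine (Set.eq_of_subset_of_ncard_le (Set.insert_subset haz hSz) ?_).symm
    rw [Set.ncard_insert_of_notMem haS]
    exact (hnd z hz).trans hS
  have hker_active : ∀ {d}, (∀ l ∈ S, φ l d = 0) → φ a d = 0 → d = 0 := fun hS ha =>
    eq_zero_of_forall_mem_activeSet_map_eq_zero hbdd hnd hz hzN <| by
      rw [hactive]
      rintro l (rfl | hl)
      exacts [ha, hS l hl]
  have ha₁ : φ a d₁ ≠ 0 := fun h => hd₁ (hker_active (hker hSz') h)
  have hd₂ : d₂ = (φ a d₂ / φ a d₁) • d₁ := by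
    have : φ a d₁ • d₂ - φ a d₂ • d₁ = 0 := hker_active
      (fun l hl => by simp [d₁, d₂, hker hSz' l hl, hker hSz'' l hl])
      (by simp only [map_sub, map_smul, smul_eq_mul]; ring)
    rw [div_eq_inv_mul, mul_smul, ← sub_eq_zero.mp this, smul_smul, inv_mul_cancel₀ ha₁, one_smul]
  have : z'' = AffineMap.lineMap z z' (φ a d₂ / φ a d₁) := by
    rw [AffineMap.lineMap_apply_module', ← hd₂, sub_add_cancel]
  exact this ▸ AffineMap.lineMap_mem_affineSpan_pair _ _ _

theorem false_of_three_vertices_of_subset_activeSet (hbdd : ∀ d : V, d ≠ 0 → ∃ l, 0 < φ l d)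
    (hnd : ∀ z, (∀ l, φ l z ≤ c l) → (activeSet φ c z).ncard ≤ N)
    {S : Set ι} (hS : N ≤ S.ncard + 1)
    {z z' z'' : V} (hz : ∀ l, φ l z ≤ c l) (hz' : ∀ l, φ l z' ≤ c l) (hz'' : ∀ l, φ l z'' ≤ c l)
    (hzN : N ≤ (activeSet φ c z).ncard) (hz'N : N ≤ (activeSet φ c z').ncard)
    (hz''N : N ≤ (activeSet φ c z'').ncard)
    (hSz : S ⊆ activeSet φ c z) (hSz' : S ⊆ activeSet φ c z') (hSz'' : S ⊆ activeSet φ c z'')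
    (hzz' : z ≠ z') (hzz'' : z ≠ z'') (hz'z'' : z' ≠ z'') : False := by
  have := collinear_insert_of_mem_affineSpan_pair
    (mem_affineSpan_pair_of_subset_activeSet hbdd hnd hS hz hzN hzz' hSz hSz' hSz'')
  rcases this.wbtw_or_wbtw_or_wbtw with h | h | h
  · exact not_sbtw_of_le_ncard_activeSet hbdd hnd hz'' hz' hzN ⟨h, hzz'', hzz'⟩
  · exact not_sbtw_of_le_ncard_activeSet hbdd hnd hz hz'' hz'N ⟨h, hzz'.symm, hz'z''⟩
  · exact not_sbtw_of_le_ncard_activeSet hbdd hnd hz' hz hz''N ⟨h, hz'z''.symm, hzz''.symm⟩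

end Finite

end Polyhedron

open Polyhedron

section Game

variable {p q : ℕ} (M : Matrix (Fin p) (Fin q) ℝ)

def constraintQ : Fin p ⊕ Fin q → (Fin q → ℝ) →ₗ[ℝ] ℝ
  | .inl i => LinearMap.proj i ∘ₗ M.mulVecLin
  | .inr j => -LinearMap.proj j

def boundQ : Fin p ⊕ Fin q → ℝ := Sum.elim 1 0

theorem memQ_iff_forall_constraintQ_le (y : Fin q → ℝ) :
    MemQ M y ↔ ∀ l, constraintQ M l y ≤ boundQ l := by
  simp [MemQ, constraintQ, boundQ, and_comm]

theorem activeSet_constraintQ (y : Fin q → ℝ) :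
    activeSet (constraintQ M) boundQ y = {l | LabelQ M y l} := by
  ext (i | j) <;> simp [constraintQ, boundQ, LabelQ]

theorem vertexQ_iff (y : Fin q → ℝ) : VertexQ M y ↔
    (∀ l, constraintQ M l y ≤ boundQ l) ∧ (activeSet (constraintQ M) boundQ y).ncard = q := by
  rw [VertexQ, memQ_iff_forall_constraintQ_le, activeSet_constraintQ]

theorem exists_constraintQ_pos (hM : ∀ i j, 0 ≤ M i j) (hMcol : ∀ j, ∃ i, M i j ≠ 0)
    (d : Fin q → ℝ) (hd : d ≠ 0) : ∃ l, 0 < constraintQ M l d := by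
  by_cases hneg : ∃ j, d j < 0
  · obtain ⟨j, hj⟩ := hneg
    exact ⟨.inr j, by simpa [constraintQ] using hj⟩
  push Not at hneg
  obtain ⟨j, hj⟩ := Function.ne_iff.mp hd
  obtain ⟨i, hi⟩ := hMcol j
  refine ⟨.inl i, show 0 < ∑ j', M i j' * d j' from ?_⟩
  refine Finset.sum_pos' (fun j' _ => mul_nonneg (hM i j') (hneg j')) ⟨j, Finset.mem_univ j, ?_⟩
  exact mul_pos ((hM i j).lt_of_ne' hi) ((hneg j).lt_of_ne' hj)

theorem false_of_three_vertexQ_of_labels_subset (hM : ∀ i j, 0 ≤ M i j)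
    (hMcol : ∀ j, ∃ i, M i j ≠ 0) (hnd : ∀ y, MemQ M y → {l | LabelQ M y l}.ncard ≤ q)
    {S : Set (Fin p ⊕ Fin q)} (hS : q ≤ S.ncard + 1) {y y' y'' : Fin q → ℝ}
    (hy : VertexQ M y) (hy' : VertexQ M y') (hy'' : VertexQ M y'')
    (hSy : S ⊆ {l | LabelQ M y l}) (hSy' : S ⊆ {l | LabelQ M y' l})
    (hSy'' : S ⊆ {l | LabelQ M y'' l})
    (hyy' : y ≠ y') (hyy'' : y ≠ y'') (hy'y'' : y' ≠ y'') : False := by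
  simp only [memQ_iff_forall_constraintQ_le, vertexQ_iff, ← activeSet_constraintQ]
    at hnd hy hy' hy'' hSy hSy' hSy''
  exact false_of_three_vertices_of_subset_activeSet (exists_constraintQ_pos M hM hMcol) hnd hS
    hy.1 hy'.1 hy''.1 hy.2.ge hy'.2.ge hy''.2.ge hSy hSy' hSy'' hyy' hyy'' hy'y''

end Game

theorem ncard_preimage_sumSwap {α β : Type*} (s : Set (α ⊕ β)) :
    (Sum.swap ⁻¹' s).ncard = s.ncard :=
  Set.ncard_preimage_of_injective_subset_range Sum.swap_leftInverse.injective
    fun l _ => Sum.swap_leftInverse.surjective l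

theorem ncard_compl_union_singleton_add {α : Type*} [Finite α] (L : Set α) (k : α) :
    Nat.card α ≤ (L ∪ {k})ᶜ.ncard + L.ncard + 1 := by
  have := Set.ncard_union_le L {k}
  rw [Set.ncard_singleton] at this
  have := Set.ncard_add_ncard_compl (L ∪ {k})
  omega

theorem false_of_three_vertexQ_almost_completely_labeled {p q : ℕ}
    {M : Matrix (Fin p) (Fin q) ℝ} (hM : ∀ i j, 0 ≤ M i j) (hMcol : ∀ j, ∃ i, M i j ≠ 0)
    (hnd : ∀ y, MemQ M y → {l | LabelQ M y l}.ncard ≤ q)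
    {L : Set (Fin p ⊕ Fin q)} (hL : L.ncard = p) (k : Fin p ⊕ Fin q) {y y' y'' : Fin q → ℝ}
    (hy : VertexQ M y) (hy' : VertexQ M y') (hy'' : VertexQ M y'')
    (hyy' : y ≠ y') (hyy'' : y ≠ y'') (hy'y'' : y' ≠ y'')
    (hLy : ∀ l, l ≠ k → l ∈ L ∨ LabelQ M y l) (hLy' : ∀ l, l ≠ k → l ∈ L ∨ LabelQ M y' l)
    (hLy'' : ∀ l, l ≠ k → l ∈ L ∨ LabelQ M y'' l) : False := by
  have hS : q ≤ (L ∪ {k})ᶜ.ncard + 1 := by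
    have := ncard_compl_union_singleton_add L k
    simp only [Nat.card_eq_fintype_card, Fintype.card_sum, Fintype.card_fin, hL] at this
    omega
  have hSlabels : ∀ {w}, (∀ l, l ≠ k → l ∈ L ∨ LabelQ M w l) →
      (L ∪ {k})ᶜ ⊆ {l | LabelQ M w l} := fun hLw l hl => by
    simp only [Set.compl_union, Set.mem_inter_iff, Set.mem_compl_singleton_iff] at hl
    exact (hLw l hl.2).resolve_left hl.1
  exact false_of_three_vertexQ_of_labels_subset M hM hMcol hnd hS hy hy' hy''
    (hSlabels hLy) (hSlabels hLy') (hSlabels hLy'') hyy' hyy'' hy'y''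

section Transpose

variable {m n : ℕ} (B : Matrix (Fin m) (Fin n) ℝ) (x : Fin m → ℝ)

theorem labelP_iff_labelQ_transpose (l : Fin m ⊕ Fin n) : LabelP B x l ↔ LabelQ Bᵀ x l.swap := by
  cases l <;> rfl

theorem ncard_labelP_eq_ncard_labelQ_transpose :
    {l | LabelP B x l}.ncard = {l | LabelQ Bᵀ x l}.ncard := by
  rw [← ncard_preimage_sumSwap {l | LabelQ Bᵀ x l}]
  congr 1
  ext l
  exact labelP_iff_labelQ_transpose B x l

theorem vertexP_iff_vertexQ_transpose : VertexP B x ↔ VertexQ Bᵀ x := by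
  rw [VertexP, VertexQ, ncard_labelP_eq_ncard_labelQ_transpose]
  rfl

end Transpose

/-- Proposition 3 of the paper (key step): in a nondegenerate game, no vertex `x`
of `P` can form `k`-almost completely labeled pairs with three pairwise distinct
vertices of `Q`, and symmetrically for vertices of `Q`. -/
theorem stmt5 {m n : ℕ} (A B : Matrix (Fin m) (Fin n) ℝ)
    (hA : ∀ i j, 0 ≤ A i j) (hBT : ∀ j i, 0 ≤ Bᵀ j i)
    (hAcol : ∀ j, ∃ i, A i j ≠ 0) (hBTcol : ∀ i, ∃ j, Bᵀ j i ≠ 0)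
    (hnd : Nondegenerate A B) (k : Fin m ⊕ Fin n) :
    (¬ ∃ (x : Fin m → ℝ) (y y' y'' : Fin n → ℝ),
        VertexP B x ∧ VertexQ A y ∧ VertexQ A y' ∧ VertexQ A y'' ∧
        y ≠ y' ∧ y ≠ y'' ∧ y' ≠ y'' ∧
        (∀ l, l ≠ k → LabelP B x l ∨ LabelQ A y l) ∧
        (∀ l, l ≠ k → LabelP B x l ∨ LabelQ A y' l) ∧
        (∀ l, l ≠ k → LabelP B x l ∨ LabelQ A y'' l)) ∧
    (¬ ∃ (y : Fin n → ℝ) (x x' x'' : Fin m → ℝ),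
        VertexQ A y ∧ VertexP B x ∧ VertexP B x' ∧ VertexP B x'' ∧
        x ≠ x' ∧ x ≠ x'' ∧ x' ≠ x'' ∧
        (∀ l, l ≠ k → LabelP B x l ∨ LabelQ A y l) ∧
        (∀ l, l ≠ k → LabelP B x' l ∨ LabelQ A y l) ∧
        (∀ l, l ≠ k → LabelP B x'' l ∨ LabelQ A y l)) := by
  constructor
  · rintro ⟨x, y, y', y'', hx, hy, hy', hy'', hyy', hyy'', hy'y'', hxy, hxy', hxy''⟩
    exact false_of_three_vertexQ_almost_completely_labeled hA hAcol hnd.2 hx.2 k hy hy' hy''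
      hyy' hyy'' hy'y'' hxy hxy' hxy''
  · rintro ⟨y, x, x', x'', hy, hx, hx', hx'', hxx', hxx'', hx'x'', hxy, hx'y, hx''y⟩
    have hndBT : ∀ x, MemQ Bᵀ x → {l | LabelQ Bᵀ x l}.ncard ≤ m := fun x hx =>
      ncard_labelP_eq_ncard_labelQ_transpose B x ▸ hnd.1 x hx
    have hswap : ∀ {x}, (∀ l, l ≠ k → LabelP B x l ∨ LabelQ A y l) →
        ∀ l, l ≠ k.swap → l ∈ Sum.swap ⁻¹' {l | LabelQ A y l} ∨ LabelQ Bᵀ x l := fun h l hl => by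
      have := h l.swap fun h' => hl (by rw [← h', Sum.swap_swap])
      rwa [labelP_iff_labelQ_transpose, Sum.swap_swap, or_comm] at this
    simp only [vertexP_iff_vertexQ_transpose] at hx hx' hx''
    exact false_of_three_vertexQ_almost_completely_labeled hBT hBTcol hndBT
      ((ncard_preimage_sumSwap _).trans hy.2) k.swap hx hx' hx'' hxx' hxx'' hx'x''
      (hswap hxy) (hswap hx'y) (hswap hx''y)
end

section
/- Let π be a permutation of {1,…,n} and let (I, I^π) be the corresponding n×n permutation game. Then (x,y) ∈ Δ_n × Δ_n is a Nash equilibrium of (I, I^π) if and only if there exists a nonempty set S ⊆ {1,…,n} with π(S) = S such that x = y and x is the uniform distribution on S (i.e. x_i = 1/|S| for i ∈ S and x_i = 0 otherwise). -/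
open Matrix BigOperators

/-- The matrix `I^π` whose `i`-th row is the transpose of the `π(i)`-th
standard unit vector. -/
def permMatrix {n : ℕ} (π : Equiv.Perm (Fin n)) : Matrix (Fin n) (Fin n) ℝ :=
  Matrix.of fun i j => if j = π i then 1 else 0

lemma permMatrix_mulVec {n : ℕ} (π : Equiv.Perm (Fin n)) (v : Fin n → ℝ) :
    permMatrix π *ᵥ v = fun i => v (π i) := by
  funext i
  simp [permMatrix, Matrix.mulVec, dotProduct, ite_mul]

lemma single_mixed {n : ℕ} (i : Fin n) :
    IsMixed (fun j => if j = i then (1:ℝ) else 0) := by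
  constructor
  · intro j; dsimp only; split <;> norm_num
  · simp

lemma single_dot {n : ℕ} (i : Fin n) (v : Fin n → ℝ) :
    (fun j => if j = i then (1:ℝ) else 0) ⬝ᵥ v = v i := by
  simp [dotProduct, ite_mul]

lemma mixed_dot_le {n : ℕ} {x v : Fin n → ℝ} (hx : IsMixed x) {m : ℝ}
    (hv : ∀ i, v i ≤ m) : x ⬝ᵥ v ≤ m := by
  calc x ⬝ᵥ v = ∑ i, x i * v i := rfl
    _ ≤ ∑ i, x i * m :=
        Finset.sum_le_sum fun i _ => mul_le_mul_of_nonneg_left (hv i) (hx.1 i)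
    _ = m := by rw [← Finset.sum_mul, hx.2, one_mul]

lemma support_eq_max {n : ℕ} {x v : Fin n → ℝ} (hx : IsMixed x) {m : ℝ}
    (hv : ∀ i, v i ≤ m) (heq : m ≤ x ⬝ᵥ v) : ∀ i, x i ≠ 0 → v i = m := by
  have hdot : x ⬝ᵥ v = m := le_antisymm (mixed_dot_le hx hv) heq
  have h0 : ∑ i, x i * (m - v i) = 0 := by
    simp only [mul_sub]
    rw [Finset.sum_sub_distrib, ← Finset.sum_mul, hx.2, one_mul]
    have : ∑ i, x i * v i = m := hdot
    linarith
  intro i hi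
  have hterm := (Finset.sum_eq_zero_iff_of_nonneg
    (fun j _ => mul_nonneg (hx.1 j) (sub_nonneg.2 (hv j)))).1 h0 i (Finset.mem_univ i)
  have : m - v i = 0 := by
    rcases mul_eq_zero.1 hterm with h | h
    · exact absurd h hi
    · exact h
  linarith

/-- Nash equilibria of the permutation game `(I, I^π)` are exactly the pairs
`(x,x)` with `x` the uniform distribution on a nonempty set `S` that is closed
under `π` (i.e. `π(S) = S`). -/
theorem stmt6 {n : ℕ} (π : Equiv.Perm (Fin n)) (x y : Fin n → ℝ) :
    IsNash (1 : Matrix (Fin n) (Fin n) ℝ) (permMatrix π) x y ↔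
      ∃ S : Finset (Fin n), S.Nonempty ∧ S.image π = S ∧ x = y ∧
        x = fun i => if i ∈ S then (1 : ℝ) / S.card else 0 := by
  classical
  constructor
  · rintro ⟨hx, hy, h1, h2⟩
    rw [Matrix.one_mulVec] at h1
    set w : Fin n → ℝ := fun j => x (π.symm j) with hw
    have hxw : ∀ z : Fin n → ℝ, x ⬝ᵥ (permMatrix π *ᵥ z) = w ⬝ᵥ z := by
      intro z
      rw [permMatrix_mulVec]
      exact Fintype.sum_equiv π _ _ (by simp [hw])
    rw [hxw] at h2
    simp only [hxw] at h2
    set v : ℝ := x ⬝ᵥ y with hv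
    set u : ℝ := w ⬝ᵥ y with hu
    have hyle : ∀ i, y i ≤ v := fun i => by
      simpa [single_dot] using h1 _ (single_mixed i)
    have hwle : ∀ j, w j ≤ u := fun j => by
      have := h2 _ (single_mixed j)
      rwa [dotProduct_comm, single_dot] at this
    have hv0 : 0 < v := by
      by_contra hc
      push_neg at hc
      have h1' : (1:ℝ) ≤ ∑ _i : Fin n, v := by
        rw [← hy.2]; exact Finset.sum_le_sum fun i _ => hyle i
      have h2' : ∑ _i : Fin n, v ≤ 0 := Finset.sum_nonpos fun i _ => hc
      linarith
    have hwsum : ∑ j, w j = 1 := by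
      rw [← hx.2]; exact Fintype.sum_equiv π.symm _ _ (by simp [hw])
    have hu0 : 0 < u := by
      by_contra hc
      push_neg at hc
      have h1' : (1:ℝ) ≤ ∑ _j : Fin n, u := by
        rw [← hwsum]; exact Finset.sum_le_sum fun j _ => hwle j
      have h2' : ∑ _j : Fin n, u ≤ 0 := Finset.sum_nonpos fun j _ => hc
      linarith
    have hsy : ∀ i, x i ≠ 0 → y i = v := support_eq_max hx hyle le_rfl
    have hsw : ∀ j, y j ≠ 0 → w j = u :=
      support_eq_max hy hwle (le_of_eq (dotProduct_comm w y))
    set S : Finset (Fin n) := Finset.univ.filter (fun i => x i ≠ 0) with hS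
    have hmem : ∀ i, i ∈ S ↔ x i ≠ 0 := by
      intro i; simp [hS]
    have hSne : S.Nonempty := by
      by_contra hc
      rw [Finset.not_nonempty_iff_eq_empty] at hc
      have hall : ∀ i, x i = 0 := by
        intro i
        by_contra hxi
        have : i ∈ S := (hmem i).2 hxi
        simp [hc] at this
      have h1s := hx.2
      rw [Finset.sum_eq_zero (fun i _ => hall i)] at h1s
      exact zero_ne_one h1s
    -- π.symm maps S into S
    have hstep : ∀ i ∈ S, π.symm i ∈ S := by
      intro i hi
      have hxi := (hmem i).1 hi
      have hyi : y i = v := hsy i hxi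
      have hyne : y i ≠ 0 := by rw [hyi]; exact ne_of_gt hv0
      have hwi : w i = u := hsw i hyne
      exact (hmem _).2 (by rw [show x (π.symm i) = w i from rfl, hwi]; exact ne_of_gt hu0)
    have hsub : S.image π.symm ⊆ S := by
      intro j hj
      rcases Finset.mem_image.1 hj with ⟨i, hi, rfl⟩
      exact hstep i hi
    have himg : S.image π.symm = S :=
      Finset.eq_of_subset_of_card_le hsub
        (by rw [Finset.card_image_of_injective _ π.symm.injective])
    have hπS : S.image π = S := by
      conv_lhs => rw [← himg]
      rw [Finset.image_image]
      simp
    have hmemπ : ∀ i ∈ S, π i ∈ S := by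
      intro i hi
      rw [← hπS]
      exact Finset.mem_image_of_mem π hi
    have hxconst : ∀ i ∈ S, x i = u := by
      intro i hi
      have hπi := hmemπ i hi
      have hyπi : y (π i) = v := hsy (π i) ((hmem _).1 hπi)
      have hyne : y (π i) ≠ 0 := by rw [hyπi]; exact ne_of_gt hv0
      have := hsw (π i) hyne
      simpa [hw] using this
    have hyzero : ∀ i, i ∉ S → y i = 0 := by
      intro i hi
      by_contra hyi
      have hwi : w i = u := hsw i hyi
      have : π.symm i ∈ S :=
        (hmem _).2 (by rw [show x (π.symm i) = w i from rfl, hwi]; exact ne_of_gt hu0)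
      have : π (π.symm i) ∈ S := hmemπ _ this
      simp at this
      exact hi this
    have hxzero : ∀ i, i ∉ S → x i = 0 := by
      intro i hi
      by_contra hxi
      exact hi ((hmem i).2 hxi)
    have hcard0 : (S.card : ℝ) ≠ 0 := by
      exact_mod_cast Finset.card_ne_zero_of_mem hSne.choose_spec
    have hsumS : ∀ (f : Fin n → ℝ), (∀ i, i ∉ S → f i = 0) → ∑ i, f i = ∑ i ∈ S, f i := by
      intro f hf
      exact (Finset.sum_subset (Finset.subset_univ S) (fun i _ hi => hf i hi)).symm
    have hucard : (S.card : ℝ) * u = 1 := by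
      have : ∑ i, x i = ∑ i ∈ S, x i := hsumS x hxzero
      rw [hx.2] at this
      rw [Finset.sum_congr rfl hxconst] at this
      simp [Finset.sum_const, mul_comm] at this
      linarith
    have hvcard : (S.card : ℝ) * v = 1 := by
      have : ∑ i, y i = ∑ i ∈ S, y i := hsumS y hyzero
      rw [hy.2] at this
      rw [Finset.sum_congr rfl (fun i hi => hsy i ((hmem i).1 hi))] at this
      simp [Finset.sum_const, mul_comm] at this
      linarith
    have huv : u = v := by
      have := hucard
      have := hvcard
      have h := mul_left_cancel₀ hcard0 (hucard.trans hvcard.symm)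
      exact h
    have hueq : u = 1 / S.card := by
      field_simp
      linarith [hucard]
    refine ⟨S, hSne, hπS, ?_, ?_⟩
    · funext i
      by_cases hi : i ∈ S
      · rw [hxconst i hi, hsy i ((hmem i).1 hi), huv]
      · rw [hxzero i hi, hyzero i hi]
    · funext i
      by_cases hi : i ∈ S
      · rw [hxconst i hi, if_pos hi, hueq]
      · rw [hxzero i hi, if_neg hi]
  · rintro ⟨S, hSne, hπS, hxy, hxdef⟩
    subst hxy
    have hcard0 : (S.card : ℝ) ≠ 0 := by
      exact_mod_cast Finset.card_ne_zero_of_mem hSne.choose_spec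
    set c : ℝ := 1 / S.card with hc
    have hc0 : 0 < c := by
      rw [hc]
      positivity
    have hxval : ∀ i, x i = if i ∈ S then c else 0 := fun i => by rw [hxdef]
    have hxnn : ∀ i, 0 ≤ x i := by
      intro i; rw [hxval]; split
      · exact le_of_lt hc0
      · exact le_refl 0
    have hxle : ∀ i, x i ≤ c := by
      intro i; rw [hxval]; split
      · exact le_refl c
      · exact le_of_lt hc0
    have hxsum : ∑ i, x i = 1 := by
      simp only [hxval]
      rw [Finset.sum_ite_mem, Finset.univ_inter, Finset.sum_const, nsmul_eq_mul, hc]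
      field_simp
    have hmix : IsMixed x := ⟨hxnn, hxsum⟩
    have hmemπ : ∀ i ∈ S, π i ∈ S := by
      intro i hi
      rw [← hπS]
      exact Finset.mem_image_of_mem π hi
    have hxx : x ⬝ᵥ x = c := by
      simp only [dotProduct, hxval, ite_mul, zero_mul]
      rw [Finset.sum_ite_mem, Finset.univ_inter]
      have : ∀ i ∈ S, c * (if i ∈ S then c else 0) = c * c := by
        intro i hi; rw [if_pos hi]
      rw [Finset.sum_congr rfl this, Finset.sum_const, nsmul_eq_mul, hc]
      field_simp
    have hBx : x ⬝ᵥ (permMatrix π *ᵥ x) = c := by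
      rw [permMatrix_mulVec]
      simp only [dotProduct, hxval, ite_mul, zero_mul]
      rw [Finset.sum_ite_mem, Finset.univ_inter]
      have : ∀ i ∈ S, c * (if π i ∈ S then c else 0) = c * c := by
        intro i hi; rw [if_pos (hmemπ i hi)]
      rw [Finset.sum_congr rfl this, Finset.sum_const, nsmul_eq_mul, hc]
      field_simp
    refine ⟨hmix, hmix, ?_, ?_⟩
    · intro x' hx'
      rw [Matrix.one_mulVec, hxx]
      exact mixed_dot_le hx' hxle
    · intro y' hy'
      rw [hBx, permMatrix_mulVec]
      have hb : ∀ i, x i * y' (π i) ≤ c * y' (π i) := fun i =>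
        mul_le_mul_of_nonneg_right (hxle i) (hy'.1 (π i))
      calc x ⬝ᵥ (fun i => y' (π i)) = ∑ i, x i * y' (π i) := rfl
        _ ≤ ∑ i, c * y' (π i) := Finset.sum_le_sum fun i _ => hb i
        _ = c * ∑ i, y' (π i) := by rw [Finset.mul_sum]
        _ = c * 1 := by rw [Fintype.sum_equiv π _ _ (fun i => rfl), hy'.2]
        _ = c := mul_one c
end

section
/- Let m ≥ 2 be even and consider bitstrings u = u_1⋯u_{4m} of length 4m with exactly m ones that satisfy the cyclic Gale evenness condition and are completely labeled with respect to the triple Morris labeling λ. If u_m = 1, then u = 1^m 0^{3m}, i.e. u_i = 1 for 1 ≤ i ≤ m and u_i = 0 for m+1 ≤ i ≤ 4m. -/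
/-- The string `τ` of `m` labels: `τ(1) = 1`, `τ(i) = i + (−1)^i` for
`2 ≤ i ≤ m−1`, `τ(m) = m`. -/
def tauStr (m : ℕ) (i : ℕ) : ℕ :=
  if i = 1 then 1 else if i = m then m else if Even i then i + 1 else i - 1

/-- The string `σ`, which is `τ` reversed: `σ(i) = τ(m−i+1)`. -/
def sigmaStr (m : ℕ) (i : ℕ) : ℕ :=
  tauStr m (m - i + 1)

/-- The triple Morris labeling of positions `1,…,4m`: `λ(i) = i` for
`1 ≤ i ≤ m`, and positions `m+1,…,4m` carry, in order, the concatenated string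
`στσ`. -/
def tripleMorrisLab (m : ℕ) (p : ℕ) : ℕ :=
  if p ≤ m then p
  else if p ≤ 2 * m then sigmaStr m (p - m)
  else if p ≤ 3 * m then tauStr m (p - 2 * m)
  else sigmaStr m (p - 3 * m)

/-- The cyclic successor structure on positions `1,…,f`: `cyc f k` reduces
`k ≥ 1` to its representative in `{1,…,f}` modulo `f`. -/
def cyc (f : ℕ) (k : ℕ) : ℕ := (k - 1) % f + 1

/-- Cyclic Gale evenness condition for a bitstring `u` on positions `1,…,f`:
every maximal block of consecutive ones in the cyclic order has even length
(a maximal block starts at position `s` whose cyclic predecessor carries a `0`,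
consists of `L` consecutive ones, and is followed by a `0`). -/
def CyclicGaleEven (f : ℕ) (u : ℕ → Bool) : Prop :=
  ∀ s L : ℕ, 1 ≤ s → s ≤ f →
    u (cyc f (s + f - 1)) = false →
    (∀ t, t < L → u (cyc f (s + t)) = true) →
    u (cyc f (s + L)) = false → Even L

lemma factB {m s j : ℕ} (hme : m % 2 = 0) (hs : s % 2 = 1) (hs3 : 3 ≤ s)
    (hsm : s + 1 ≤ m) (hj1 : 1 ≤ j) (hjm : j ≤ m)
    (h : tauStr m j = s - 1) : j = s := by
  unfold tauStr at h
  split_ifs at h with h1 h2 h3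
  · omega
  · omega
  · rw [Nat.even_iff] at h3; omega
  · rw [Nat.even_iff] at h3; omega

lemma tau_sm1 {m s : ℕ} (hs : s % 2 = 1) (hs3 : 3 ≤ s) (hsm : s + 1 ≤ m) :
    tauStr m (s - 1) = s := by
  unfold tauStr
  rw [if_neg (by omega), if_neg (by omega), if_pos (by rw [Nat.even_iff]; omega)]
  omega

lemma tau_sp1 {m s : ℕ} (hme : m % 2 = 0) (hs : s % 2 = 1) (hs3 : 3 ≤ s)
    (hsm : s + 1 ≤ m) : s ≤ tauStr m (s + 1) ∧ tauStr m (s + 1) ≤ m := by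
  unfold tauStr
  split_ifs with h1 h2 h3
  · omega
  · omega
  · rw [Nat.even_iff] at h3; omega
  · rw [Nat.even_iff] at h3; omega

/-- Proposition 5 of the paper (first part): if `u` is a bitstring of length
`4m` with exactly `m` ones satisfying cyclic Gale evenness that is completely
labeled with respect to the triple Morris labeling, and `u_m = 1`, then
`u = 1^m 0^{3m}`. -/
theorem stmt10 {m : ℕ} (hm : 2 ≤ m) (hme : Even m) (u : ℕ → Bool)
    (hones : ((Finset.Icc 1 (4 * m)).filter fun i => u i = true).card = m)
    (hgale : CyclicGaleEven (4 * m) u)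
    (hcl : ((Finset.Icc 1 (4 * m)).filter fun i => u i = true).image
        (tripleMorrisLab m) = Finset.Icc 1 m)
    (hum : u m = true) :
    ∀ i ∈ Finset.Icc 1 (4 * m), (u i = true ↔ i ≤ m) := by
  classical
  rw [Nat.even_iff] at hme
  -- injectivity of the labeling on ones
  have hinj : Set.InjOn (tripleMorrisLab m)
      ((Finset.Icc 1 (4 * m)).filter fun i => u i = true) := by
    rw [← Finset.card_image_iff, hcl, hones, Nat.card_Icc]
    omega
  have key : ∀ p q : ℕ, 1 ≤ p → p ≤ 4 * m → 1 ≤ q → q ≤ 4 * m →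
      u p = true → u q = true →
      tripleMorrisLab m p = tripleMorrisLab m q → p = q := by
    intro p q hp1 hp2 hq1 hq2 hup huq hl
    exact hinj
      (Finset.mem_coe.mpr (Finset.mem_filter.mpr
        ⟨Finset.mem_Icc.mpr ⟨hp1, hp2⟩, hup⟩))
      (Finset.mem_coe.mpr (Finset.mem_filter.mpr
        ⟨Finset.mem_Icc.mpr ⟨hq1, hq2⟩, huq⟩)) hl
  have lab_le : ∀ v : ℕ, v ≤ m → tripleMorrisLab m v = v := by
    intro v hv; unfold tripleMorrisLab; rw [if_pos hv]
  -- cyc computations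
  have cyc_id : ∀ k, 1 ≤ k → k ≤ 4 * m → cyc (4 * m) k = k := by
    intro k h1 h2; unfold cyc
    rw [Nat.mod_eq_of_lt (by omega)]; omega
  have cyc_pred : ∀ p, 2 ≤ p → p ≤ 4 * m → cyc (4 * m) (p + 4 * m - 1) = p - 1 := by
    intro p h1 h2; unfold cyc
    have h3 : p + 4 * m - 1 - 1 = (p - 2) + 4 * m := by omega
    rw [h3, Nat.add_mod_right, Nat.mod_eq_of_lt (by omega)]
    omega
  -- singleton blocks contradict Gale evenness
  have gale1 : ∀ p, 2 ≤ p → p + 1 ≤ 4 * m → u (p - 1) = false → u p = true →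
      u (p + 1) = false → False := by
    intro p hp1 hp2 h0 h1 h2
    have hev : Even 1 := by
      refine hgale p 1 (by omega) (by omega) ?_ ?_ ?_
      · rw [cyc_pred p hp1 (by omega)]; exact h0
      · intro t ht
        have : t = 0 := by omega
        subst this
        rw [Nat.add_zero, cyc_id p (by omega) (by omega)]; exact h1
      · rw [cyc_id (p + 1) (by omega) hp2]; exact h2
    exact (Nat.not_even_iff.mpr (by norm_num)) hev
  -- let s be the least start of an all-ones run ending at m
  have hex : ∃ s, ∀ j, s ≤ j → j ≤ m → u j = true := by
    refine ⟨m, fun j h1 h2 => ?_⟩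
    have : j = m := by omega
    rw [this]; exact hum
  set s := Nat.find hex with hsdef
  have hPs : ∀ j, s ≤ j → j ≤ m → u j = true := Nat.find_spec hex
  have hsm : s ≤ m := Nat.find_le (fun j h1 h2 => by
    have : j = m := by omega
    rw [this]; exact hum)
  by_cases hs1 : s ≤ 1
  · -- all of 1..m are ones, counting finishes the proof
    have hall : ∀ j, 1 ≤ j → j ≤ m → u j = true := fun j h1 h2 =>
      hPs j (by omega) h2
    have hsub : Finset.Icc 1 m ⊆
        (Finset.Icc 1 (4 * m)).filter fun i => u i = true := by
      intro i hi
      rw [Finset.mem_Icc] at hi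
      exact Finset.mem_filter.mpr
        ⟨Finset.mem_Icc.mpr ⟨hi.1, by omega⟩, hall i hi.1 hi.2⟩
    have heq : Finset.Icc 1 m =
        (Finset.Icc 1 (4 * m)).filter fun i => u i = true := by
      refine Finset.eq_of_subset_of_card_le hsub ?_
      rw [hones, Nat.card_Icc]; omega
    intro i hi
    rw [Finset.mem_Icc] at hi
    constructor
    · intro hui
      have : i ∈ Finset.Icc 1 m := by
        rw [heq]
        exact Finset.mem_filter.mpr ⟨Finset.mem_Icc.mpr hi, hui⟩
      exact (Finset.mem_Icc.mp this).2
    · intro him; exact hall i hi.1 him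
  · exfalso
    have hs2 : 2 ≤ s := by omega
    -- u (s-1) = false by minimality
    have hu_sm1 : u (s - 1) = false := by
      have hnot := Nat.find_min hex (m := s - 1) (by omega)
      push_neg at hnot
      obtain ⟨j, hj1, hj2, hj3⟩ := hnot
      have hj : j = s - 1 := by
        by_contra h
        exact hj3 (hPs j (by omega) hj2)
      rw [← hj]
      exact Bool.eq_false_iff.mpr hj3
    -- label m occurs at m+1, which is therefore 0
    have hlab_m1 : tripleMorrisLab m (m + 1) = m := by
      unfold tripleMorrisLab sigmaStr
      rw [if_neg (by omega), if_pos (by omega)]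
      have : m - (m + 1 - m) + 1 = m := by omega
      rw [this]
      unfold tauStr
      rw [if_neg (by omega), if_pos rfl]
    have hu_m1 : u (m + 1) = false := by
      by_contra h
      rw [Bool.not_eq_false] at h
      have := key (m + 1) m (by omega) (by omega) (by omega) (by omega) h hum
        (by rw [hlab_m1, lab_le m le_rfl])
      omega
    -- the maximal block s..m has even length
    have hLeven : Even (m - s + 1) := by
      refine hgale s (m - s + 1) (by omega) (by omega) ?_ ?_ ?_
      · rw [cyc_pred s hs2 (by omega)]; exact hu_sm1
      · intro t ht
        rw [cyc_id (s + t) (by omega) (by omega)]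
        exact hPs (s + t) (by omega) (by omega)
      · have : s + (m - s + 1) = m + 1 := by omega
        rw [this, cyc_id (m + 1) (by omega) (by omega)]
        exact hu_m1
    rw [Nat.even_iff] at hLeven
    have hsodd : s % 2 = 1 := by omega
    have hs3 : 3 ≤ s := by omega
    have hsm1 : s + 1 ≤ m := by omega
    -- every position beyond m with label in [s,m] is 0
    have Z : ∀ q, m + 1 ≤ q → q ≤ 4 * m → s ≤ tripleMorrisLab m q →
        tripleMorrisLab m q ≤ m → u q = false := by
      intro q h1 h2 h3 h4
      by_contra h
      rw [Bool.not_eq_false] at h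
      have hv := hPs (tripleMorrisLab m q) h3 h4
      have := key q (tripleMorrisLab m q) (by omega) h2 (by omega) (by omega)
        h hv (by rw [lab_le (tripleMorrisLab m q) h4])
      omega
    -- find the position p carrying label s-1
    have hmem : s - 1 ∈ (((Finset.Icc 1 (4 * m)).filter fun i => u i = true).image
        (tripleMorrisLab m)) := by
      rw [hcl, Finset.mem_Icc]; omega
    obtain ⟨p, hpT, hplab⟩ := Finset.mem_image.mp hmem
    obtain ⟨hpI, hpu⟩ := Finset.mem_filter.mp hpT
    rw [Finset.mem_Icc] at hpI
    have hpm : m < p := by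
      by_contra h
      push_neg at h
      rw [lab_le p h] at hplab
      rw [hplab] at hpu
      rw [hu_sm1] at hpu
      exact Bool.false_ne_true hpu
    -- determine p
    have hcases : p = 2 * m - s + 1 ∨ p = 2 * m + s ∨ p = 4 * m - s + 1 := by
      unfold tripleMorrisLab sigmaStr at hplab
      split_ifs at hplab with h1 h2 h3
      · omega
      · have := factB hme hsodd hs3 hsm1 (j := m - (p - m) + 1)
          (by omega) (by omega) hplab
        omega
      · have := factB hme hsodd hs3 hsm1 (j := p - 2 * m)
          (by omega) (by omega) hplab
        omega
      · have := factB hme hsodd hs3 hsm1 (j := m - (p - 3 * m) + 1)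
          (by omega) (by omega) hplab
        omega
    have htp := tau_sp1 (m := m) (s := s) hme hsodd hs3 hsm1
    have htm := tau_sm1 (m := m) (s := s) hsodd hs3 hsm1
    -- neighbor label computations
    have lab1 : tripleMorrisLab m (2 * m - s) = tauStr m (s + 1) := by
      unfold tripleMorrisLab sigmaStr
      rw [if_neg (by omega), if_pos (by omega)]
      congr 1; omega
    have lab2 : tripleMorrisLab m (2 * m - s + 2) = tauStr m (s - 1) := by
      unfold tripleMorrisLab sigmaStr
      rw [if_neg (by omega), if_pos (by omega)]
      congr 1; omega
    have lab3 : tripleMorrisLab m (2 * m + s - 1) = tauStr m (s - 1) := by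
      unfold tripleMorrisLab
      rw [if_neg (by omega), if_neg (by omega), if_pos (by omega)]
      congr 1; omega
    have lab4 : tripleMorrisLab m (2 * m + s + 1) = tauStr m (s + 1) := by
      unfold tripleMorrisLab
      rw [if_neg (by omega), if_neg (by omega), if_pos (by omega)]
      congr 1; omega
    have lab5 : tripleMorrisLab m (4 * m - s) = tauStr m (s + 1) := by
      unfold tripleMorrisLab sigmaStr
      rw [if_neg (by omega), if_neg (by omega), if_neg (by omega)]
      congr 1; omega
    have lab6 : tripleMorrisLab m (4 * m - s + 2) = tauStr m (s - 1) := by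
      unfold tripleMorrisLab sigmaStr
      rw [if_neg (by omega), if_neg (by omega), if_neg (by omega)]
      congr 1; omega
    rcases hcases with hp | hp | hp
    · refine gale1 p (by omega) (by omega) ?_ hpu ?_
      · have h1 : p - 1 = 2 * m - s := by omega
        rw [h1]
        exact Z _ (by omega) (by omega) (by rw [lab1]; exact htp.1)
          (by rw [lab1]; exact htp.2)
      · have h1 : p + 1 = 2 * m - s + 2 := by omega
        rw [h1]
        exact Z _ (by omega) (by omega) (by rw [lab2, htm]) (by rw [lab2, htm]; omega)
    · refine gale1 p (by omega) (by omega) ?_ hpu ?_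
      · have h1 : p - 1 = 2 * m + s - 1 := by omega
        rw [h1]
        exact Z _ (by omega) (by omega) (by rw [lab3, htm]) (by rw [lab3, htm]; omega)
      · have h1 : p + 1 = 2 * m + s + 1 := by omega
        rw [h1]
        exact Z _ (by omega) (by omega) (by rw [lab4]; exact htp.1)
          (by rw [lab4]; exact htp.2)
    · refine gale1 p (by omega) (by omega) ?_ hpu ?_
      · have h1 : p - 1 = 4 * m - s := by omega
        rw [h1]
        exact Z _ (by omega) (by omega) (by rw [lab5]; exact htp.1)
          (by rw [lab5]; exact htp.2)
      · have h1 : p + 1 = 4 * m - s + 2 := by omega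
        rw [h1]
        exact Z _ (by omega) (by omega) (by rw [lab6, htm]) (by rw [lab6, htm]; omega)
end

section
/- Let m ≥ 2 be even. The number of bitstrings u of length 4m with exactly m ones that satisfy the cyclic Gale evenness condition and are completely labeled with respect to the triple Morris labeling λ equals 3^{m/2} + 1. Moreover, every such bitstring other than 1^m 0^{3m} satisfies u_i = 0 for all i ∈ {1,…,m} (so in the corresponding m×3m unit vector game there are exactly 3^{m/2} Nash equilibria, each with full support for player 1). -/
/-!
Since `S` has `m` elements and meets all `m` labels, the labeling is injective on `S`. Outside the
first block, `στσ` consists of three copies of `τ`, two of them reversed, and both sides of the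
cuts `4m | 1` and `2m | 2m+1` carry the label `1`, so no run of ones crosses these cuts.

If `1 ∈ S`, then inductively `1, …, 2k ∈ S` forces `2k+1, 2k+2 ∈ S`: the label `2k+1 = τ(2k)`
placed in a copy of `τ` would be an isolated one, its neighbours carrying the labels
`τ(2k ± 1) ≤ 2k` used already. Hence `S = {1, …, m}`.

If `1 ∉ S`, then inductively the labels `τ(2k+1), τ(2k+2)` occupy the letters `2k+1, 2k+2` of a
single copy of `τ`: the label `τ(2k+1)` cannot sit in the first block, where it would be isolated,
and a run in its copy ending at the letter `2k+1` would start at an even letter `2j+2 ≤ 2k` whose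
partner `2j+1` already lies in the same copy. This gives `3^{m/2}` sets; they and `{1, …, m}` are
unions of aligned pairs `{2i-1, 2i}`, hence Gale even.
-/

open Finset

section Cyclic

variable {f : ℕ}

lemma cyc_of_le {k : ℕ} (hk : 1 ≤ k) (hkf : k ≤ f) : cyc f k = k := by
  unfold cyc
  rw [Nat.mod_eq_of_lt (by omega)]
  omega

lemma cyc_add_self {k : ℕ} (hk : 1 ≤ k) : cyc f (k + f) = cyc f k := by
  unfold cyc
  rw [show k + f - 1 = k - 1 + f by omega, Nat.add_mod_right]

lemma cyc_le (hf : 0 < f) (k : ℕ) : cyc f k ≤ f := by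
  unfold cyc
  have := Nat.mod_lt (k - 1) hf
  omega

lemma cyc_mod_two (hf : Even f) {k : ℕ} (hk : 1 ≤ k) : cyc f k % 2 = k % 2 := by
  unfold cyc
  have := Nat.mod_mod_of_dvd (k - 1) (even_iff_two_dvd.1 hf)
  omega

lemma cyc_succ {k : ℕ} (hk : 1 ≤ k) (h : cyc f k < f) : cyc f (k + 1) = cyc f k + 1 := by
  unfold cyc at *
  have h1 : 1 % f = 1 := Nat.mod_eq_of_lt (by omega)
  rw [show k + 1 - 1 = k - 1 + 1 by omega, Nat.add_mod_of_add_mod_lt (by omega), h1]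

theorem CyclicGaleEven.even_of_run {S : Finset ℕ}
    (h : CyclicGaleEven f fun i => decide (i ∈ S)) {a b : ℕ} (ha : 1 ≤ a) (hab : a ≤ b)
    (hbf : b ≤ f) (hrun : ∀ q, a ≤ q → q ≤ b → q ∈ S)
    (hpred : (if a = 1 then f else a - 1) ∉ S) (hsucc : (if b = f then 1 else b + 1) ∉ S) :
    Even (b - a + 1) := by
  refine h a (b - a + 1) ha (by omega) ?_ (fun t ht => ?_) ?_
  · have : cyc f (a + f - 1) = if a = 1 then f else a - 1 := by
      split_ifs with ha1
      · rw [ha1, Nat.add_sub_cancel_left]; exact cyc_of_le (by omega) le_rfl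
      · rw [show a + f - 1 = a - 1 + f by omega, cyc_add_self (by omega),
          cyc_of_le (by omega) (by omega)]
    simpa [this] using hpred
  · simpa [cyc_of_le (f := f) (k := a + t) (by omega) (by omega)] using hrun (a + t) (by omega)
      (by omega)
  · have : cyc f (a + (b - a + 1)) = if b = f then 1 else b + 1 := by
      rw [show a + (b - a + 1) = b + 1 by omega]
      split_ifs with hb
      · subst hb; rw [add_comm, cyc_add_self le_rfl, cyc_of_le le_rfl (by omega)]
      · exact cyc_of_le (by omega) (by omega)
    simpa [this] using hsucc

theorem cyclicGaleEven_of_pairs {S : Finset ℕ} (hf : Even f)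
    (hpair : ∀ q, q % 2 = 1 → (q ∈ S ↔ q + 1 ∈ S)) :
    CyclicGaleEven f fun i => decide (i ∈ S) := by
  intro s L hs hsf hpred hrun hsucc
  simp only [decide_eq_false_iff_not, decide_eq_true_eq] at hpred hrun hsucc
  rcases Nat.eq_zero_or_pos L with rfl | hL
  · exact ⟨0, rfl⟩
  have hs_odd : s % 2 = 1 := by
    by_contra hs_even
    rw [show s + f - 1 = s - 1 + f by omega, cyc_add_self (by omega),
      cyc_of_le (by omega) (by omega)] at hpred
    have hs_mem : s ∈ S := by simpa [cyc_of_le hs hsf] using hrun 0 hL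
    exact hpred ((hpair (s - 1) (by omega)).2 (by rwa [Nat.sub_add_cancel (by omega)]))
  by_contra hL_odd
  rw [Nat.not_even_iff] at hL_odd
  -- the last one of the block sits at an odd position, so its partner is the following zero
  have hlast := hrun (L - 1) (by omega)
  have hlast_odd : cyc f (s + (L - 1)) % 2 = 1 := by rw [cyc_mod_two hf (by omega)]; omega
  have hlast_lt : cyc f (s + (L - 1)) < f := by
    have := cyc_le (f := f) (by omega) (s + (L - 1))
    have : f % 2 = 0 := Nat.even_iff.1 hf
    omega
  have hnext := cyc_succ (by omega) hlast_lt
  rw [show s + (L - 1) + 1 = s + L by omega] at hnext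
  exact hsucc (hnext ▸ (hpair _ hlast_odd).1 hlast)

end Cyclic

theorem Nat.exists_run_start {P : ℕ → Prop} {i : ℕ} (hi : 1 ≤ i) (hP : P i) :
    ∃ a, 1 ≤ a ∧ a ≤ i ∧ (∀ j, a ≤ j → j ≤ i → P j) ∧ (a = 1 ∨ ¬ P (a - 1)) := by
  induction i, hi using Nat.le_induction with
  | base => exact ⟨1, le_rfl, le_rfl, fun j h1 h2 => by rwa [show j = 1 by omega], Or.inl rfl⟩
  | succ i hi ih =>
    by_cases hPi : P i
    · obtain ⟨a, ha, hai, hrun, hstart⟩ := ih hPi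
      refine ⟨a, ha, by omega, fun j h1 h2 => ?_, hstart⟩
      rcases Nat.lt_or_ge i j with hj | hj
      · rwa [show j = i + 1 by omega]
      · exact hrun j h1 hj
    · exact ⟨i + 1, by omega, le_rfl, fun j h1 h2 => by rwa [show j = i + 1 by omega],
        Or.inr (by simpa using hPi)⟩

section Labels

variable {m i : ℕ}

lemma tauStr_one : tauStr m 1 = 1 := rfl

lemma tauStr_le_succ (m i : ℕ) : tauStr m i ≤ i + 1 := by
  unfold tauStr; split_ifs <;> omega

lemma tauStr_two_mul {k : ℕ} (hkm : 2 * k < m) : tauStr m (2 * k) = 2 * k + 1 := by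
  rw [tauStr, if_neg (by omega), if_neg (by omega), if_pos (even_two_mul k)]

lemma tauStr_two_mul_add_one {k : ℕ} (hk : 1 ≤ k) (hkm : 2 * k + 1 < m) :
    tauStr m (2 * k + 1) = 2 * k := by
  rw [tauStr, if_neg (by omega), if_neg (by omega), if_neg (by simp)]
  rfl

lemma tauStr_mem_Icc (hi : i ∈ Icc 1 m) : tauStr m i ∈ Icc 1 m := by
  rw [mem_Icc] at *
  unfold tauStr
  split_ifs with _ _ he
  · omega
  · omega
  · omega
  · rw [Nat.not_even_iff] at he; omega

lemma tauStr_tauStr (hm : Even m) (hi : i ∈ Icc 1 m) : tauStr m (tauStr m i) = i := by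
  rw [mem_Icc] at hi
  rw [Nat.even_iff] at hm
  unfold tauStr
  split_ifs <;> simp_all [Nat.even_iff] <;> omega

lemma tripleMorrisLab_of_le {p : ℕ} (hp : p ≤ m) : tripleMorrisLab m p = p := by
  rw [tripleMorrisLab, if_pos hp]

/-- Position of the `i`-th letter of `τ` in the `e`-th of the three copies of `τ` that make up
`στσ` (read backwards in the two copies of `σ`). -/
def tauPos (m : ℕ) : Fin 3 → ℕ → ℕ
  | 0, i => 2 * m + 1 - i
  | 1, i => 2 * m + i
  | 2, i => 4 * m + 1 - i

lemma tauPos_mem_Icc (hi : i ∈ Icc 1 m) (e : Fin 3) : tauPos m e i ∈ Icc (m + 1) (4 * m) := by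
  rw [mem_Icc] at *
  fin_cases e <;> simp only [tauPos] <;> omega

lemma tauPos_inj {e e' : Fin 3} {i' : ℕ} (hi : i ∈ Icc 1 m) (hi' : i' ∈ Icc 1 m)
    (h : tauPos m e i = tauPos m e' i') : e = e' ∧ i = i' := by
  rw [mem_Icc] at *
  fin_cases e <;> fin_cases e' <;> simp only [tauPos] at h <;> simp <;> omega

lemma exists_tauPos {p : ℕ} (hp : p ∈ Icc (m + 1) (4 * m)) :
    ∃ e i, i ∈ Icc 1 m ∧ tauPos m e i = p := by
  rw [mem_Icc] at hp
  simp only [mem_Icc]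
  by_cases h2 : p ≤ 2 * m
  · exact ⟨0, 2 * m + 1 - p, by omega, by simp only [tauPos]; omega⟩
  by_cases h3 : p ≤ 3 * m
  · exact ⟨1, p - 2 * m, by omega, by simp only [tauPos]; omega⟩
  · exact ⟨2, 4 * m + 1 - p, by omega, by simp only [tauPos]; omega⟩

lemma tripleMorrisLab_tauPos (hi : i ∈ Icc 1 m) (e : Fin 3) :
    tripleMorrisLab m (tauPos m e i) = tauStr m i := by
  rw [mem_Icc] at hi
  fin_cases e
  · show tripleMorrisLab m (2 * m + 1 - i) = _
    rw [tripleMorrisLab, if_neg (by omega), if_pos (by omega), sigmaStr]; congr 1; omega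
  · show tripleMorrisLab m (2 * m + i) = _
    rw [tripleMorrisLab, if_neg (by omega), if_neg (by omega), if_pos (by omega)]; congr 1; omega
  · show tripleMorrisLab m (4 * m + 1 - i) = _
    rw [tripleMorrisLab, if_neg (by omega), if_neg (by omega), if_neg (by omega), sigmaStr]
    congr 1; omega

lemma tripleMorrisLab_eq_one {p : ℕ} (hm : 1 ≤ m)
    (hp : p = 1 ∨ p = 2 * m ∨ p = 2 * m + 1 ∨ p = 4 * m) :
    tripleMorrisLab m p = 1 := by
  have h1 : 1 ∈ Icc 1 m := by simp [hm]
  rcases hp with rfl | rfl | rfl | rfl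
  · exact tripleMorrisLab_of_le hm
  · simpa [tauPos, tauStr_one] using tripleMorrisLab_tauPos h1 0
  · simpa [tauPos, tauStr_one] using tripleMorrisLab_tauPos h1 1
  · simpa [tauPos, tauStr_one] using tripleMorrisLab_tauPos h1 2

lemma tauPos_pair (hm : Even m) {k q : ℕ} (hk : 2 * k + 2 ≤ m) (hq : q % 2 = 1) (e : Fin 3) :
    (∃ r : Fin 2, tauPos m e (2 * k + r + 1) = q) ↔
      ∃ r : Fin 2, tauPos m e (2 * k + r + 1) = q + 1 := by
  obtain ⟨n, rfl⟩ := hm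
  fin_cases e <;> simp [Fin.exists_fin_two, tauPos] <;> omega

end Labels

def IsCompletelyLabeledGale (m : ℕ) (S : Finset ℕ) : Prop :=
  S ⊆ Icc 1 (4 * m) ∧ S.card = m ∧ CyclicGaleEven (4 * m) (fun i => decide (i ∈ S)) ∧
    S.image (tripleMorrisLab m) = Icc 1 m

namespace IsCompletelyLabeledGale

variable {m : ℕ} {S : Finset ℕ}

theorem injOn (h : IsCompletelyLabeledGale m S) : Set.InjOn (tripleMorrisLab m) S :=
  Finset.injOn_of_card_image_eq (by rw [h.2.2.2, Nat.card_Icc, h.2.1]; omega)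

theorem not_mem_of_lab_eq (h : IsCompletelyLabeledGale m S) {p q : ℕ} (hp : p ∈ S) (hqp : q ≠ p)
    (hl : tripleMorrisLab m q = tripleMorrisLab m p) : q ∉ S :=
  fun hq => hqp (h.injOn hq hp hl)

theorem not_mem_of_lab_eq_one (h : IsCompletelyLabeledGale m S) (hm : 1 ≤ m) {p q : ℕ}
    (hp : p ∈ S) (hqp : q ≠ p) (hp1 : p = 1 ∨ p = 2 * m ∨ p = 2 * m + 1 ∨ p = 4 * m)
    (hq1 : q = 1 ∨ q = 2 * m ∨ q = 2 * m + 1 ∨ q = 4 * m) : q ∉ S :=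
  h.not_mem_of_lab_eq hp hqp (by rw [tripleMorrisLab_eq_one hm hp1, tripleMorrisLab_eq_one hm hq1])

theorem tauStr_mem_or_tauPos_mem (h : IsCompletelyLabeledGale m S) (hm : Even m) {i : ℕ}
    (hi : i ∈ Icc 1 m) : tauStr m i ∈ S ∨ ∃ e, tauPos m e i ∈ S := by
  have hlab : tauStr m i ∈ S.image (tripleMorrisLab m) := h.2.2.2 ▸ tauStr_mem_Icc hi
  obtain ⟨p, hp, hpl⟩ := mem_image.1 hlab
  have hp4 := mem_Icc.1 (h.1 hp)
  by_cases hpm : p ≤ m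
  · left
    rwa [← hpl, tripleMorrisLab_of_le hpm]
  · obtain ⟨e, j, hj, rfl⟩ := exists_tauPos (mem_Icc.2 ⟨by omega, hp4.2⟩)
    right
    refine ⟨e, ?_⟩
    rw [tripleMorrisLab_tauPos hj] at hpl
    rwa [← tauStr_tauStr hm hj, hpl, tauStr_tauStr hm hi] at hp

theorem tauStr_not_mem_of_tauPos_mem (h : IsCompletelyLabeledGale m S) {i : ℕ} {e : Fin 3}
    (hi : i ∈ Icc 1 m) (he : tauPos m e i ∈ S) : tauStr m i ∉ S := by
  have hτ := mem_Icc.1 (tauStr_mem_Icc hi)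
  refine h.not_mem_of_lab_eq he (fun heq => ?_) ?_
  · have := mem_Icc.1 (tauPos_mem_Icc hi e)
    omega
  · rw [tripleMorrisLab_of_le hτ.2, tripleMorrisLab_tauPos hi]

theorem eq_of_tauPos_mem (h : IsCompletelyLabeledGale m S) {i : ℕ} {e e' : Fin 3}
    (hi : i ∈ Icc 1 m) (he : tauPos m e i ∈ S) (he' : tauPos m e' i ∈ S) : e = e' :=
  (tauPos_inj hi hi
    (h.injOn he he' (by rw [tripleMorrisLab_tauPos hi, tripleMorrisLab_tauPos hi]))).1

theorem even_of_run_of_le (h : IsCompletelyLabeledGale m S) {a b : ℕ} (ha : 1 ≤ a) (hab : a ≤ b)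
    (hbm : b < m) (hrun : ∀ q, a ≤ q → q ≤ b → q ∈ S) (hstart : a = 1 ∨ a - 1 ∉ S)
    (hend : b + 1 ∉ S) : Even (b - a + 1) := by
  refine h.2.2.1.even_of_run ha hab (by omega) hrun ?_ (by rwa [if_neg (by omega)])
  split_ifs with ha1
  · exact h.not_mem_of_lab_eq_one (by omega) (hrun 1 (by omega) (by omega)) (by omega)
      (Or.inl rfl) (by omega)
  · exact hstart.resolve_left ha1

theorem even_of_tauPos_run (h : IsCompletelyLabeledGale m S) (e : Fin 3) {a b : ℕ} (ha : 1 ≤ a)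
    (hab : a ≤ b) (hbm : b < m) (hrun : ∀ i, a ≤ i → i ≤ b → tauPos m e i ∈ S)
    (hstart : a = 1 ∨ tauPos m e (a - 1) ∉ S) (hend : tauPos m e (b + 1) ∉ S) :
    Even (b - a + 1) := by
  have hG := h.2.2.1
  have ha_mem := hrun a le_rfl hab
  fin_cases e <;> simp only [tauPos] at hrun hstart hend ha_mem
  · have := hG.even_of_run (a := 2 * m + 1 - b) (b := 2 * m + 1 - a) (by omega) (by omega)
      (by omega) (fun q h1 h2 => by
        have := hrun (2 * m + 1 - q) (by omega) (by omega)
        rwa [show 2 * m + 1 - (2 * m + 1 - q) = q by omega] at this)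
      (by rwa [if_neg (by omega), show 2 * m + 1 - b - 1 = 2 * m + 1 - (b + 1) by omega])
      (by
        rw [if_neg (by omega)]
        rcases hstart with rfl | hstart
        · exact h.not_mem_of_lab_eq_one (by omega) ha_mem (by omega) (by omega) (by omega)
        · rwa [show 2 * m + 1 - a + 1 = 2 * m + 1 - (a - 1) by omega])
    rwa [show 2 * m + 1 - a - (2 * m + 1 - b) = b - a by omega] at this
  · have := hG.even_of_run (a := 2 * m + a) (b := 2 * m + b) (by omega) (by omega)
      (by omega) (fun q h1 h2 => by
        have := hrun (q - 2 * m) (by omega) (by omega)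
        rwa [show 2 * m + (q - 2 * m) = q by omega] at this)
      (by
        rw [if_neg (by omega)]
        rcases hstart with rfl | hstart
        · exact h.not_mem_of_lab_eq_one (by omega) ha_mem (by omega) (by omega) (by omega)
        · rwa [show 2 * m + a - 1 = 2 * m + (a - 1) by omega])
      (by rwa [if_neg (by omega), add_assoc])
    rwa [show 2 * m + b - (2 * m + a) = b - a by omega] at this
  · have := hG.even_of_run (a := 4 * m + 1 - b) (b := 4 * m + 1 - a) (by omega) (by omega)
      (by omega) (fun q h1 h2 => by
        have := hrun (4 * m + 1 - q) (by omega) (by omega)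
        rwa [show 4 * m + 1 - (4 * m + 1 - q) = q by omega] at this)
      (by rwa [if_neg (by omega), show 4 * m + 1 - b - 1 = 4 * m + 1 - (b + 1) by omega])
      (by
        by_cases ha1 : a = 1
        · subst ha1
          rw [if_pos (by omega)]
          exact h.not_mem_of_lab_eq_one (by omega) ha_mem (by omega) (by omega) (by omega)
        · rw [if_neg (by omega), show 4 * m + 1 - a + 1 = 4 * m + 1 - (a - 1) by omega]
          exact hstart.resolve_left ha1)
    rwa [show 4 * m + 1 - a - (4 * m + 1 - b) = b - a by omega] at this

theorem two_mem (h : IsCompletelyLabeledGale m S) (hm2 : 2 ≤ m) (h1 : 1 ∈ S) : 2 ∈ S := by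
  by_contra h2
  have := h.even_of_run_of_le le_rfl le_rfl (by omega)
    (fun q h1q hq1 => by rwa [show q = 1 by omega]) (Or.inl rfl) h2
  exact Nat.not_even_one this

theorem mem_of_Icc_subset (h : IsCompletelyLabeledGale m S) (hm : Even m) {k : ℕ} (hk : 1 ≤ k)
    (hkm : 2 * k + 2 ≤ m) (hP : Icc 1 (2 * k) ⊆ S) : 2 * k + 1 ∈ S ∧ 2 * k + 2 ∈ S := by
  have hodd : 2 * k + 1 ∈ S := by
    have hi : 2 * k ∈ Icc 1 m := mem_Icc.2 ⟨by omega, by omega⟩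
    rcases h.tauStr_mem_or_tauPos_mem hm hi with hτ | ⟨e, he⟩
    · rwa [tauStr_two_mul (by omega)] at hτ
    -- both neighbours of `2k` in this copy of `τ` carry labels already used in `1, …, 2k`
    have hprev : tauPos m e (2 * k - 1) ∉ S := fun hmem =>
      h.tauStr_not_mem_of_tauPos_mem (mem_Icc.2 ⟨by omega, by omega⟩) hmem
        (hP (mem_Icc.2 ⟨(mem_Icc.1 (tauStr_mem_Icc (mem_Icc.2 ⟨by omega, by omega⟩))).1,
          (tauStr_le_succ m _).trans (by omega)⟩))
    have hnext : tauPos m e (2 * k + 1) ∉ S := fun hmem =>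
      h.tauStr_not_mem_of_tauPos_mem (mem_Icc.2 ⟨by omega, by omega⟩) hmem
        (by rw [tauStr_two_mul_add_one hk (by omega)]; exact hP (mem_Icc.2 ⟨by omega, le_rfl⟩))
    have := h.even_of_tauPos_run e (a := 2 * k) (b := 2 * k) (by omega) le_rfl (by omega)
      (fun i h1 h2 => by rwa [show i = 2 * k by omega]) (Or.inr hprev) hnext
    simp at this
  refine ⟨hodd, by_contra fun hnot => ?_⟩
  have := h.even_of_run_of_le (a := 1) (b := 2 * k + 1) le_rfl (by omega) (by omega)
    (fun q h1 h2 => by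
      rcases Nat.lt_or_ge (2 * k) q with hq | hq
      · rwa [show q = 2 * k + 1 by omega]
      · exact hP (mem_Icc.2 ⟨h1, hq⟩)) (Or.inl rfl) hnot
  rw [Nat.even_add_one] at this
  exact this (by simp)

theorem Icc_subset_of_one_mem (h : IsCompletelyLabeledGale m S) (hm2 : 2 ≤ m) (hm : Even m)
    (h1 : 1 ∈ S) : Icc 1 m ⊆ S := by
  suffices ∀ k, 1 ≤ k → 2 * k ≤ m → Icc 1 (2 * k) ⊆ S by
    have := this (m / 2) (by omega) (by omega)
    rwa [show 2 * (m / 2) = m by rw [Nat.even_iff] at hm; omega] at this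
  intro k hk
  induction k, hk using Nat.le_induction with
  | base =>
    intro _ q hq
    rcases show q = 1 ∨ q = 2 by rw [mem_Icc] at hq; omega with rfl | rfl
    exacts [h1, h.two_mem hm2 h1]
  | succ k hk ih =>
    intro hkm q hq
    obtain ⟨hodd, heven⟩ := h.mem_of_Icc_subset hm hk (by omega) (ih (by omega))
    rw [mem_Icc] at hq
    rcases Nat.lt_or_ge (2 * k) q with hq' | hq'
    · rcases show q = 2 * k + 1 ∨ q = 2 * k + 2 by omega with rfl | rfl
      exacts [hodd, heven]
    · exact ih (by omega) (mem_Icc.2 ⟨hq.1, hq'⟩)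

theorem not_mem_of_dominoes (h : IsCompletelyLabeledGale m S) (hm : Even m) {k v : ℕ}
    (hD : ∀ j < k, ∃ e, tauPos m e (2 * j + 1) ∈ S ∧ tauPos m e (2 * j + 2) ∈ S)
    (hv : v ∈ Icc 1 m) (hvk : tauStr m v ≤ 2 * k) : v ∉ S := by
  have hi := tauStr_mem_Icc hv
  obtain ⟨e, he⟩ : ∃ e, tauPos m e (tauStr m v) ∈ S := by
    obtain ⟨e, hodd, heven⟩ := hD ((tauStr m v - 1) / 2) (by rw [mem_Icc] at hi; omega)
    rcases show tauStr m v = 2 * ((tauStr m v - 1) / 2) + 1 ∨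
        tauStr m v = 2 * ((tauStr m v - 1) / 2) + 2 by rw [mem_Icc] at hi; omega with hτ | hτ
    · exact ⟨e, hτ ▸ hodd⟩
    · exact ⟨e, hτ ▸ heven⟩
  simpa [tauStr_tauStr hm hv] using h.tauStr_not_mem_of_tauPos_mem hi he

theorem tauStr_not_mem_of_dominoes (h : IsCompletelyLabeledGale m S) (hm : Even m) (h1 : 1 ∉ S)
    {k : ℕ} (hkm : 2 * k + 2 ≤ m)
    (hD : ∀ j < k, ∃ e, tauPos m e (2 * j + 1) ∈ S ∧ tauPos m e (2 * j + 2) ∈ S) :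
    tauStr m (2 * k + 1) ∉ S := by
  rcases Nat.eq_zero_or_pos k with rfl | hk
  · exact h1
  rw [tauStr_two_mul_add_one hk (by omega)]
  intro hmem
  have hprev : 2 * k - 1 ∉ S := h.not_mem_of_dominoes hm hD (mem_Icc.2 ⟨by omega, by omega⟩)
    ((tauStr_le_succ m _).trans (by omega))
  have hnext : 2 * k + 1 ∉ S := h.not_mem_of_dominoes hm hD (mem_Icc.2 ⟨by omega, by omega⟩)
    (by rw [tauStr_two_mul_add_one hk (by omega)])
  have := h.even_of_run_of_le (a := 2 * k) (b := 2 * k) (by omega) le_rfl (by omega)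
    (fun q h1 h2 => by rwa [show q = 2 * k by omega]) (Or.inr hprev) hnext
  simp at this

theorem tauPos_succ_mem_of_dominoes (h : IsCompletelyLabeledGale m S) {k : ℕ} {e : Fin 3}
    (hkm : 2 * k + 2 ≤ m)
    (hD : ∀ j < k, ∃ e, tauPos m e (2 * j + 1) ∈ S ∧ tauPos m e (2 * j + 2) ∈ S)
    (he : tauPos m e (2 * k + 1) ∈ S) : tauPos m e (2 * k + 2) ∈ S := by
  by_contra hnot
  obtain ⟨a, ha, hak, hrun, hstart⟩ :=
    Nat.exists_run_start (P := fun i => tauPos m e i ∈ S) (by omega) he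
  have heven := Nat.even_iff.1 (h.even_of_tauPos_run e ha hak (by omega) hrun hstart hnot)
  -- the run starts at an even index `a = 2j + 2`, whose partner `2j + 1` lies in the same copy
  obtain ⟨e', hodd', heven'⟩ := hD ((a - 2) / 2) (by omega)
  rw [show 2 * ((a - 2) / 2) + 2 = a by omega] at heven'
  obtain rfl := h.eq_of_tauPos_mem (mem_Icc.2 ⟨ha, by omega⟩) (hrun a le_rfl hak) heven'
  rcases hstart with rfl | hprev
  · omega
  · exact hprev (by rwa [show a - 1 = 2 * ((a - 2) / 2) + 1 by omega])

theorem dominoes_of_one_not_mem (h : IsCompletelyLabeledGale m S) (hm : Even m) (h1 : 1 ∉ S) :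
    ∀ k, 2 * k ≤ m → ∀ j < k, ∃ e, tauPos m e (2 * j + 1) ∈ S ∧ tauPos m e (2 * j + 2) ∈ S := by
  intro k
  induction k with
  | zero => intro _ j hj; omega
  | succ k ih =>
    intro hkm j hj
    have hD := ih (by omega)
    rcases Nat.lt_or_ge j k with hjk | hjk
    · exact hD j hjk
    obtain rfl : j = k := by omega
    rcases h.tauStr_mem_or_tauPos_mem hm (i := 2 * j + 1) (mem_Icc.2 ⟨by omega, by omega⟩)
      with hτ | ⟨e, he⟩
    · exact absurd hτ (h.tauStr_not_mem_of_dominoes hm h1 (by omega) hD)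
    · exact ⟨e, he, h.tauPos_succ_mem_of_dominoes (by omega) hD he⟩

end IsCompletelyLabeledGale

/-- For each `k < m / 2`, the pair of letters `2k+1, 2k+2` of `τ` is placed in the copy `c k`. -/
def dominoSet (m : ℕ) (c : Fin (m / 2) → Fin 3) : Finset ℕ :=
  (univ : Finset (Fin (m / 2) × Fin 2)).image fun x => tauPos m (c x.1) (2 * x.1 + x.2 + 1)

section DominoSet

variable {m : ℕ}

lemma mem_dominoSet {c : Fin (m / 2) → Fin 3} {q : ℕ} :
    q ∈ dominoSet m c ↔ ∃ k : Fin (m / 2), ∃ r : Fin 2, tauPos m (c k) (2 * k + r + 1) = q := by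
  simp [dominoSet]

lemma index_mem_Icc (k : Fin (m / 2)) (r : Fin 2) : 2 * (k : ℕ) + r + 1 ∈ Icc 1 m :=
  mem_Icc.2 ⟨by omega, by have := k.2; have := r.2; omega⟩

lemma lt_of_mem_dominoSet {c : Fin (m / 2) → Fin 3} {q : ℕ} (hq : q ∈ dominoSet m c) : m < q := by
  obtain ⟨k, r, rfl⟩ := mem_dominoSet.1 hq
  have := mem_Icc.1 (tauPos_mem_Icc (index_mem_Icc k r) (c k))
  omega

lemma image_dominoSet (hm : Even m) (c : Fin (m / 2) → Fin 3) :
    (dominoSet m c).image (tripleMorrisLab m) = Icc 1 m := by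
  ext v
  simp only [dominoSet, image_image, mem_image, mem_univ, true_and, Prod.exists,
    Function.comp_apply]
  constructor
  · rintro ⟨k, r, rfl⟩
    rw [tripleMorrisLab_tauPos (index_mem_Icc k r)]
    exact tauStr_mem_Icc (index_mem_Icc k r)
  · intro hv
    have hi := mem_Icc.1 (tauStr_mem_Icc hv)
    have hm2 := Nat.even_iff.1 hm
    refine ⟨⟨(tauStr m v - 1) / 2, by omega⟩, ⟨(tauStr m v - 1) % 2, by omega⟩, ?_⟩
    rw [tripleMorrisLab_tauPos (index_mem_Icc _ _)]
    simp only
    rw [show 2 * ((tauStr m v - 1) / 2) + (tauStr m v - 1) % 2 + 1 = tauStr m v by omega,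
      tauStr_tauStr hm hv]

lemma card_dominoSet (hm : Even m) (c : Fin (m / 2) → Fin 3) : (dominoSet m c).card = m := by
  refine le_antisymm ?_ ?_
  · calc (dominoSet m c).card ≤ (univ : Finset (Fin (m / 2) × Fin 2)).card := card_image_le
      _ = m := by simp [Nat.div_mul_cancel (even_iff_two_dvd.1 hm)]
  · calc m = ((dominoSet m c).image (tripleMorrisLab m)).card := by
          rw [image_dominoSet hm, Nat.card_Icc]; omega
      _ ≤ (dominoSet m c).card := card_image_le

lemma isCompletelyLabeledGale_dominoSet (hm : Even m) (c : Fin (m / 2) → Fin 3) :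
    IsCompletelyLabeledGale m (dominoSet m c) := by
  refine ⟨fun q hq => ?_, card_dominoSet hm c, ?_, image_dominoSet hm c⟩
  · obtain ⟨k, r, rfl⟩ := mem_dominoSet.1 hq
    exact Icc_subset_Icc (by omega) le_rfl (tauPos_mem_Icc (index_mem_Icc k r) (c k))
  · refine cyclicGaleEven_of_pairs (hm.mul_left 4) fun q hq => ?_
    simp only [mem_dominoSet]
    exact exists_congr fun k =>
      tauPos_pair hm (by have := k.2; have := Nat.even_iff.1 hm; omega) hq (c k)

lemma dominoSet_injective : Function.Injective (dominoSet m) := by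
  intro c c' hcc'
  funext k
  have hmem : tauPos m (c k) (2 * k + (0 : Fin 2) + 1) ∈ dominoSet m c' :=
    hcc' ▸ mem_dominoSet.2 ⟨k, 0, rfl⟩
  obtain ⟨k', r', hk'⟩ := mem_dominoSet.1 hmem
  obtain ⟨he, hi⟩ := tauPos_inj (index_mem_Icc k' r') (index_mem_Icc k 0) hk'
  obtain rfl : k' = k := Fin.ext (by have := r'.2; simp at hi; omega)
  exact he.symm

end DominoSet

lemma isCompletelyLabeledGale_Icc {m : ℕ} (hm : Even m) : IsCompletelyLabeledGale m (Icc 1 m) := by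
  refine ⟨Icc_subset_Icc le_rfl (by omega), by simp, ?_, ?_⟩
  · refine cyclicGaleEven_of_pairs (hm.mul_left 4) fun q hq => ?_
    have := Nat.even_iff.1 hm
    simp only [mem_Icc]
    omega
  · exact (image_congr fun p hp => tripleMorrisLab_of_le (mem_Icc.1 hp).2).trans image_id

theorem IsCompletelyLabeledGale.eq_Icc_or_eq_dominoSet {m : ℕ} {S : Finset ℕ}
    (h : IsCompletelyLabeledGale m S) (hm2 : 2 ≤ m) (hm : Even m) :
    S = Icc 1 m ∨ ∃ c, S = dominoSet m c := by
  by_cases h1 : 1 ∈ S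
  · exact Or.inl (eq_of_subset_of_card_le (h.Icc_subset_of_one_mem hm2 hm h1)
      (by rw [h.2.1, Nat.card_Icc]; omega)).symm
  · have hD := h.dominoes_of_one_not_mem hm h1 (m / 2) (by omega)
    choose c hc using fun k : Fin (m / 2) => hD k k.2
    refine Or.inr ⟨c, (eq_of_subset_of_card_le (fun q hq => ?_) ?_).symm⟩
    · obtain ⟨k, r, rfl⟩ := mem_dominoSet.1 hq
      fin_cases r
      exacts [(hc k).1, (hc k).2]
    · rw [h.2.1, card_dominoSet hm]

theorem isCompletelyLabeledGale_iff {m : ℕ} (hm2 : 2 ≤ m) (hm : Even m) {S : Finset ℕ} :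
    IsCompletelyLabeledGale m S ↔ S = Icc 1 m ∨ ∃ c, S = dominoSet m c :=
  ⟨fun h => h.eq_Icc_or_eq_dominoSet hm2 hm, by
    rintro (rfl | ⟨c, rfl⟩)
    exacts [isCompletelyLabeledGale_Icc hm, isCompletelyLabeledGale_dominoSet hm c]⟩

/-- Proposition 4 of the paper: the number of bitstrings of length `4m`
(identified with their sets `S` of one-positions in `{1,…,4m}`) with exactly `m`
ones that satisfy the cyclic Gale evenness condition and are completely labeled
with respect to the triple Morris labeling equals `3^{m/2} + 1`; moreover, every
such bitstring other than `1^m 0^{3m}` has no one among the first `m` positions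
(full support for player 1 in the corresponding `m × 3m` unit vector game). -/
theorem stmt11 {m : ℕ} (hm : 2 ≤ m) (hme : Even m) :
    {S : Finset ℕ | S ⊆ Finset.Icc 1 (4 * m) ∧ S.card = m ∧
        CyclicGaleEven (4 * m) (fun i => decide (i ∈ S)) ∧
        S.image (tripleMorrisLab m) = Finset.Icc 1 m}.ncard = 3 ^ (m / 2) + 1 ∧
    ∀ S : Finset ℕ, S ⊆ Finset.Icc 1 (4 * m) → S.card = m →
      CyclicGaleEven (4 * m) (fun i => decide (i ∈ S)) →
      S.image (tripleMorrisLab m) = Finset.Icc 1 m →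
      S ≠ Finset.Icc 1 m → ∀ i ∈ Finset.Icc 1 m, i ∉ S := by
  refine ⟨?_, fun S h1 h2 h3 h4 hne i hi hiS => ?_⟩
  · have hIcc : Icc 1 m ∉ univ.image (dominoSet m) := by
      simp only [mem_image, mem_univ, true_and, not_exists]
      intro c hc
      have := lt_of_mem_dominoSet (hc ▸ left_mem_Icc.2 (by omega) : 1 ∈ dominoSet m c)
      omega
    have hset : {S : Finset ℕ | IsCompletelyLabeledGale m S} =
        ↑(insert (Icc 1 m) (univ.image (dominoSet m))) := by
      ext S
      simp [isCompletelyLabeledGale_iff hm hme, eq_comm]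
    change {S : Finset ℕ | IsCompletelyLabeledGale m S}.ncard = _
    rw [hset, Set.ncard_coe_finset, card_insert_of_notMem hIcc,
      card_image_of_injective _ dominoSet_injective]
    simp
  · obtain rfl | ⟨c, rfl⟩ := (isCompletelyLabeledGale_iff hm hme).1 ⟨h1, h2, h3, h4⟩
    · exact hne rfl
    · have := lt_of_mem_dominoSet hiS
      rw [mem_Icc] at hi
      omega
end
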